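/- If n is a non-deficient number, then KL(n) > 0. -/

import Mathlib

/-- The sum of the positive divisors of `n`. -/
def sigma1 (n : ℕ) : ℕ := ∑ d ∈ n.divisors, d

/-- `KL n = ∑_{d ∣ n} d · log (d / (2 φ(d)))`. -/
noncomputable def KL (n : ℕ) : ℝ :=
  ∑ d ∈ n.divisors, (d : ℝ) * Real.log ((d : ℝ) / (2 * (Nat.totient d : ℝ)))

/-!
Since `d / φ d = ∏_{p ∣ d} p / (p - 1)`, exchanging the order of summation gives
`KL n = σ n * (∑_{p ∣ n} (1 - 1 / σ (p ^ a_p)) * log (p / (p - 1)) - log 2)`, where `p ^ a_p ∥ n`.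
Non-deficiency gives `log 2 ≤ log (σ n / n) = ∑_{p ∣ n} log (σ (p ^ a_p) / p ^ a_p)`, and each
summand is strictly below `(1 - 1 / σ (p ^ a_p)) * log (p / (p - 1))`: with `q = p ^ (a_p + 1)`
this says `(p - 1) * log (p / (p - 1)) < (q - 1) * log (q / (q - 1))`, a consequence of the
concavity of `log`.
-/

open Real Finset
open scoped ArithmeticFunction.sigma Nat

/-- `(x - 1) * log (x / (x - 1))` is the slope of `log` between `1` and `1 + (x - 1)⁻¹`. -/
theorem strictMonoOn_sub_one_mul_log_div_sub_one :
    StrictMonoOn (fun x : ℝ => (x - 1) * log (x / (x - 1))) (Set.Ioi 1) := by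
  intro x (hx : 1 < x) y (hy : 1 < y) hxy
  have hu : ∀ z : ℝ, 1 < z → z / (z - 1) = 1 + (z - 1)⁻¹ := fun z hz => by
    have : z - 1 ≠ 0 := by linarith
    field_simp; ring
  have key := strictConcaveOn_log_Ioi.secant_strict_mono (a := 1) (x := 1 + (y - 1)⁻¹)
    (y := 1 + (x - 1)⁻¹) (Set.mem_Ioi.2 one_pos) (by simp; positivity) (by simp; positivity)
    (by simp; linarith) (by simp; linarith) (by gcongr)
  simp only [log_one, sub_zero, add_sub_cancel_left, div_inv_eq_mul] at key
  simpa only [hu x hx, hu y hy, mul_comm] using key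

theorem log_geom_sum_div_pow_lt {x : ℝ} (hx : 1 < x) {a : ℕ} (ha : a ≠ 0) :
    log ((∑ k ∈ range (a + 1), x ^ k) / x ^ a) <
      (1 - 1 / ∑ k ∈ range (a + 1), x ^ k) * log (x / (x - 1)) := by
  set y := x ^ (a + 1) with hy
  have hxy : x < y := lt_self_pow₀ hx (by omega)
  have hx1 : x - 1 ≠ 0 := by linarith
  have hy1 : y - 1 ≠ 0 := by linarith
  have hmono := strictMonoOn_sub_one_mul_log_div_sub_one hx (hx.trans hxy) hxy
  rw [geom_sum_eq hx.ne', ← hy, one_div_div]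
  have hsplit : (y - 1) / (x - 1) / x ^ a = (x / (x - 1)) / (y / (y - 1)) := by
    rw [hy, pow_succ]; field_simp
  rw [hsplit, log_div (by positivity) (by positivity)]
  have hscaled : (x - 1) / (y - 1) * log (x / (x - 1)) < log (y / (y - 1)) := by
    rw [div_mul_eq_mul_div, div_lt_iff₀ (by linarith)]
    linarith only [hmono]
  linarith only [hscaled]

theorem log_div_totient {d : ℕ} (hd : d ≠ 0) :
    log (d / φ d) = ∑ p ∈ d.primeFactors, log (p / (p - 1)) := by
  have hp : ∀ p ∈ d.primeFactors, (1 : ℝ) < p := fun p hp => by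
    exact_mod_cast (Nat.prime_of_mem_primeFactors hp).one_lt
  have h := congrArg (Rat.cast : ℚ → ℝ) (Nat.totient_eq_mul_prod_factors d)
  push_cast at h
  rw [h, div_mul_cancel_left₀ (by exact_mod_cast hd), ← prod_inv_distrib,
    log_prod fun p hp' => inv_ne_zero (sub_ne_zero.2 (inv_lt_one_of_one_lt₀ (hp p hp')).ne')]
  refine sum_congr rfl fun p hp' => congrArg log ?_
  have : (p : ℝ) ≠ 0 := by linarith [hp p hp']
  have : (p : ℝ) - 1 ≠ 0 := by linarith [hp p hp']
  field_simp

theorem Nat.filter_not_dvd_divisors {n p : ℕ} (hp : p.Prime) (hn : n ≠ 0) :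
    {d ∈ n.divisors | ¬p ∣ d} = (ordCompl[p] n).divisors := by
  ext d
  simp only [mem_filter, Nat.mem_divisors]
  constructor
  · rintro ⟨⟨hdn, -⟩, hpd⟩
    refine ⟨?_, (Nat.ordCompl_pos p hn).ne'⟩
    have hcop : d.Coprime (p ^ n.factorization p) :=
      (hp.coprime_iff_not_dvd.2 hpd).symm.pow_right _
    exact hcop.dvd_of_dvd_mul_left ((Nat.ordProj_mul_ordCompl_eq_self n p).symm ▸ hdn)
  · rintro ⟨hdm, -⟩
    exact ⟨⟨hdm.trans (Nat.ordCompl_dvd n p), hn⟩,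
      fun hpd => Nat.not_dvd_ordCompl hp hn (hpd.trans hdm)⟩

theorem ArithmeticFunction.IsMultiplicative.map_ordProj_mul_map_ordCompl {R : Type*}
    [MonoidWithZero R] {f : ArithmeticFunction R} (hf : f.IsMultiplicative) {n p : ℕ}
    (hp : p.Prime) (hn : n ≠ 0) : f (ordProj[p] n) * f (ordCompl[p] n) = f n := by
  rw [← hf.map_mul_of_coprime ((Nat.coprime_ordCompl hp hn).pow_left _),
    Nat.ordProj_mul_ordCompl_eq_self]

theorem sum_divisors_filter_dvd {n p : ℕ} (hp : p.Prime) (hn : n ≠ 0) :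
    ∑ d ∈ n.divisors with p ∣ d, (d : ℝ) = σ 1 n * (1 - 1 / σ 1 (ordProj[p] n)) := by
  have hσ : ∀ m : ℕ, ∑ d ∈ m.divisors, (d : ℝ) = σ 1 m := fun m => by
    rw [ArithmeticFunction.sigma_one_apply]; push_cast; rfl
  have hsplit := sum_filter_add_sum_filter_not n.divisors (p ∣ ·) (fun d => (d : ℝ))
  rw [Nat.filter_not_dvd_divisors hp hn, hσ, hσ] at hsplit
  have hmul := congrArg (Nat.cast : ℕ → ℝ)
    ((ArithmeticFunction.isMultiplicative_sigma (k := 1)).map_ordProj_mul_map_ordCompl hp hn)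
  have hpos : (0 : ℝ) < σ 1 (ordProj[p] n) := by
    exact_mod_cast ArithmeticFunction.sigma_pos 1 _ (pow_ne_zero _ hp.ne_zero)
  push_cast at hmul
  rw [← hmul]
  field_simp
  linarith

theorem KL_eq_sigma_mul {n : ℕ} (hn : n ≠ 0) :
    KL n = σ 1 n * (∑ p ∈ n.primeFactors,
      (1 - 1 / σ 1 (ordProj[p] n)) * log (p / (p - 1)) - log 2) := by
  have hterm : ∀ d ∈ n.divisors, (d : ℝ) * log (d / (2 * φ d)) =
      ∑ p ∈ d.primeFactors, d * log (p / (p - 1)) - d * log 2 := fun d hd => by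
    have hd0 : d ≠ 0 := (Nat.pos_of_mem_divisors hd).ne'
    have hφ : (φ d : ℝ) ≠ 0 := by exact_mod_cast (Nat.totient_pos.2 (Nat.pos_of_ne_zero hd0)).ne'
    rw [div_mul_eq_div_div_swap, log_div (div_ne_zero (by exact_mod_cast hd0) hφ) two_ne_zero,
      log_div_totient hd0, mul_sub, mul_sum]
  have hswap : ∑ d ∈ n.divisors, ∑ p ∈ d.primeFactors, (d : ℝ) * log (p / (p - 1)) =
      ∑ p ∈ n.primeFactors, ∑ d ∈ n.divisors with p ∣ d, (d : ℝ) * log (p / (p - 1)) :=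
    sum_comm' fun d p => by
      simp only [Nat.mem_divisors, Nat.mem_primeFactors, mem_filter]
      exact ⟨fun ⟨hdn, hp, hpd, _⟩ => ⟨⟨hdn, hpd⟩, hp, hpd.trans hdn.1, hn⟩,
        fun ⟨⟨hdn, hpd⟩, hp, _⟩ => ⟨hdn, hp, hpd, ne_zero_of_dvd_ne_zero hn hdn.1⟩⟩
  unfold KL
  rw [sum_congr rfl hterm, sum_sub_distrib, hswap, ← sum_mul, mul_sub, mul_sum]
  congr 1
  · refine sum_congr rfl fun p hp => ?_
    rw [← sum_mul, sum_divisors_filter_dvd (Nat.prime_of_mem_primeFactors hp) hn]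
    ring
  · rw [ArithmeticFunction.sigma_one_apply]
    push_cast
    rfl

theorem log_sigma_div_self {n : ℕ} (hn : n ≠ 0) :
    log (σ 1 n / n) =
      ∑ p ∈ n.primeFactors, log (σ 1 (ordProj[p] n) / ordProj[p] n) := by
  nth_rw 2 [← Nat.prod_factorization_pow_eq_self hn]
  rw [ArithmeticFunction.isMultiplicative_sigma.multiplicative_factorization (σ 1) hn,
    Finsupp.prod, Finsupp.prod, Nat.support_factorization]
  push_cast
  rw [← prod_div_distrib, log_prod]
  intro p hp
  have hp0 := Nat.pos_of_mem_primeFactors hp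
  have hσ := ArithmeticFunction.sigma_pos 1 (ordProj[p] n) (pow_ne_zero _ hp0.ne')
  positivity

theorem log_sigma_one_prime_pow_div_lt {p a : ℕ} (hp : p.Prime) (ha : a ≠ 0) :
    log (σ 1 (p ^ a) / p ^ a) < (1 - 1 / σ 1 (p ^ a)) * log (p / (p - 1)) := by
  rw [ArithmeticFunction.sigma_one_apply_prime_pow hp]
  push_cast
  exact log_geom_sum_div_pow_lt (by exact_mod_cast hp.one_lt) ha

theorem KL_pos_of_nondeficient (n : ℕ) (hn : 0 < n) (hnondef : 2 * n ≤ sigma1 n) :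
    KL n > 0 := by
  have hn0 : n ≠ 0 := hn.ne'
  have hσ : 2 * n ≤ σ 1 n := ArithmeticFunction.sigma_one_apply n ▸ hnondef
  have hn1 : n ≠ 1 := by rintro rfl; simp at hσ
  have hσpos : (0 : ℝ) < σ 1 n := by exact_mod_cast ArithmeticFunction.sigma_pos 1 n hn0
  rw [KL_eq_sigma_mul hn0]
  refine mul_pos hσpos (sub_pos.2 ?_)
  calc log 2 ≤ log (σ 1 n / n) :=
        log_le_log two_pos ((le_div_iff₀ (by positivity)).2 (by exact_mod_cast hσ))
    _ = ∑ p ∈ n.primeFactors, log (σ 1 (ordProj[p] n) / ordProj[p] n) := log_sigma_div_self hn0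
    _ < _ := sum_lt_sum_of_nonempty (Nat.nonempty_primeFactors.2 (by omega)) fun p hp =>
        log_sigma_one_prime_pow_div_lt (Nat.prime_of_mem_primeFactors hp)
          (Finsupp.mem_support_iff.1 (by rwa [Nat.support_factorization]))
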